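/- Let π : Ã* → G be an m-epi, let A be an involutive Ã-automaton, and suppose there is a path from a state p to a state q in A labelled by a word w with wπ = 1. Let B be the automaton obtained from A by identifying the states p and q. Then L(A) ⊆ L(B) and (L(B))π = (L(A))π. -/

import Mathlib

/-!  Common framework: words over an involutive alphabet Ã = A ∪ A⁻¹ (modelled as
`α × Bool`), free reduction, matched epimorphisms, Stallings sections and
Ã-automata, following Silva–Soler-Escrivà–Ventura. -/

/-- A word over the involutive alphabet Ã = A ∪ A⁻¹: the letter `(a, tt)` denotes
`a` and `(a, ff)` denotes `a⁻¹` (the `FreeGroup` convention). -/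
abbrev Word (α : Type) : Type := List (α × Bool)

namespace Stallings

instance {β : Type} : HasSubset (Language β) := ⟨fun L M => ∀ w ∈ L, w ∈ M⟩
instance {β : Type} : Union (Language β) := ⟨fun L M => {w | w ∈ L ∨ w ∈ M}⟩
instance {β : Type} : Inter (Language β) := ⟨fun L M => {w | w ∈ L ∧ w ∈ M}⟩
instance {β : Type} : EmptyCollection (Language β) := ⟨(∅ : Set (List β))⟩

variable {α : Type} {G : Type} [Group G]

/-- The formal inverse of a letter of Ã. -/
def letterInv (x : α × Bool) : α × Bool := (x.1, !x.2)

/-- The formal inverse `w⁻¹` of a word over Ã. -/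
def wordInv (w : Word α) : Word α := (w.map letterInv).reverse

/-- The free reduction `w̄` of a word over Ã (iterated deletion of factors `a a⁻¹`). -/
noncomputable def redW (w : Word α) : Word α :=
  letI := Classical.decEq α
  FreeGroup.reduce w

/-- The reduction `L̄` of a language over Ã. -/
noncomputable def red (L : Language (α × Bool)) : Language (α × Bool) :=
  redW '' L

/-- The set `R_A` of reduced words over Ã. -/
noncomputable def Reduced : Language (α × Bool) := {w | redW w = w}

/-- Evaluation of a monoid homomorphism `π : Ã* → G` at a word. -/
def ev (π : FreeMonoid (α × Bool) →* G) (w : Word α) : G :=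
  π (FreeMonoid.ofList w)

/-- The image of a language under (evaluation of) `π`. -/
def evImg (π : FreeMonoid (α × Bool) →* G) (L : Language (α × Bool)) : Set G :=
  {g | ∃ w ∈ L, ev π w = g}

/-- A matched epimorphism (m-epi) `π : Ã* → G`: a surjective monoid homomorphism
sending formal inverses to inverses. -/
structure IsMEpi (π : FreeMonoid (α × Bool) →* G) : Prop where
  surjective : Function.Surjective π
  matched : ∀ (a : α) (b : Bool),
    π (FreeMonoid.of (a, !b)) = (π (FreeMonoid.of (a, b)))⁻¹

/-- `S_X = Xπ⁻¹ ∩ S`, for `X ⊆ G`. -/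
def sub (S : Language (α × Bool)) (π : FreeMonoid (α × Bool) →* G) (X : Set G) :
    Language (α × Bool) :=
  {w ∈ S | ev π w ∈ X}

/-- A Stallings section for an m-epi `π : Ã* → G`: a regular section `S ⊆ R_A`
such that each `S_g` is regular (S1), and `S_{gh} ⊆ (S_g S_h)‾` (S2). -/
structure IsStallingsSection (π : FreeMonoid (α × Bool) →* G)
    (S : Language (α × Bool)) : Prop where
  regular : S.IsRegular
  reduced : S ⊆ Reduced
  inv_mem : ∀ w ∈ S, wordInv w ∈ S
  exists_rep : ∀ g : G, ∃ w ∈ S, ev π w = g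
  s1 : ∀ g : G, (sub S π {g}).IsRegular
  s2 : ∀ g h : G, sub S π {g * h} ⊆ red (sub S π {g} * sub S π {h})

/-- A group has a Stallings section if some m-epi onto it (from the free monoid on
an involutive finite alphabet) admits a Stallings section. -/
def HasStallingsSection (G : Type) [Group G] : Prop :=
  ∃ (α : Type) (π : FreeMonoid (α × Bool) →* G) (S : Language (α × Bool)),
    Finite α ∧ IsMEpi π ∧ IsStallingsSection π S

/-- `Pref L`: the set of prefixes of words of `L`. -/
def Pref (L : Language (α × Bool)) : Language (α × Bool) :=
  {u | ∃ v, u ++ v ∈ L}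

/-- An extendable Stallings section: every `u ∈ S` admits a reduced word `v` with
`u vⁿ ∈ S` for all `n` and `u ∈ Pref (S_{(u vⁿ u⁻¹)π})` for almost all `n`. -/
def Extendable (π : FreeMonoid (α × Bool) →* G) (S : Language (α × Bool)) : Prop :=
  ∀ u ∈ S, ∃ v : Word α, v ∈ Reduced ∧
    (∀ n : ℕ, u ++ (List.replicate n v).flatten ∈ S) ∧
    ∃ N : ℕ, ∀ n ≥ N, u ∈ Pref (sub S π {ev π u * (ev π v) ^ n * (ev π u)⁻¹})

/-- An Ã-automaton with state type `Q`, initial state `start`, terminal states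
`accept` and edge set `edges`. -/
structure Automaton (β : Type) (Q : Type) where
  start : Q
  accept : Set Q
  edges : Set (Q × β × Q)

namespace Automaton

variable {β Q : Type}

/-- `M.Path p w q`: there is a path from `p` to `q` labelled `w`. -/
inductive Path (M : Automaton β Q) : Q → List β → Q → Prop
  | nil (q : Q) : Path M q [] q
  | cons {p q r : Q} {a : β} {w : List β} :
      (p, a, q) ∈ M.edges → Path M q w r → Path M p (a :: w) r

/-- The language recognized by an automaton. -/
def lang (M : Automaton β Q) : Language β :=
  {w | ∃ t ∈ M.accept, M.Path M.start w t}

/-- A trim automaton: every state lies on some successful path. -/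
def Trim (M : Automaton β Q) : Prop :=
  ∀ q : Q, ∃ (u v : List β) (t : Q), t ∈ M.accept ∧ M.Path M.start u q ∧ M.Path q v t

/-- An involutive Ã-automaton. -/
def Involutive {α : Type} (M : Automaton (α × Bool) Q) : Prop :=
  ∀ p a q, (p, a, q) ∈ M.edges → (q, letterInv a, p) ∈ M.edges

/-- A deterministic automaton. -/
def Deterministic (M : Automaton β Q) : Prop :=
  ∀ p a q q', (p, a, q) ∈ M.edges → (p, a, q') ∈ M.edges → q = q'

/-- An inverse automaton: involutive, deterministic, trim, with a single
terminal state. -/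
def IsInverse {α : Type} (M : Automaton (α × Bool) Q) : Prop :=
  M.Involutive ∧ M.Deterministic ∧ M.Trim ∧ ∃ t : Q, M.accept = {t}

/-- The automaton obtained by identifying the states `p` and `q` (the quotient is
realized on the same state type, redirecting `q` to `p`). -/
def merge [DecidableEq Q] (M : Automaton β Q) (p q : Q) : Automaton β Q :=
  let f : Q → Q := fun x => if x = q then p else x
  { start := f M.start
    accept := f '' M.accept
    edges := {e | ∃ e' ∈ M.edges, e = (f e'.1, e'.2.1, f e'.2.2)} }

end Automaton

end Stallings


/-! A path in the merged automaton may cross between `p` and `q` for free: each such jump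
is replaced by the path `w` from `p` to `q`, or by its inverse `w⁻¹` from `q` to `p`
(available since the automaton is involutive). Both have value `1` in `G`, so lifting a
successful path of the merged automaton back to the original one keeps its image in `G`. -/

namespace Stallings

variable {α G Q : Type} [Group G]

section Evaluation

variable (π : FreeMonoid (α × Bool) →* G)

lemma ev_append (u v : Word α) : ev π (u ++ v) = ev π u * ev π v :=
  map_mul π (FreeMonoid.ofList u) (FreeMonoid.ofList v)

lemma ev_singleton (a : α × Bool) : ev π [a] = π (FreeMonoid.of a) := rfl

lemma ev_cons (a : α × Bool) (u : Word α) : ev π (a :: u) = π (FreeMonoid.of a) * ev π u :=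
  ev_append π [a] u

variable {π}

lemma ev_wordInv
    (hπ : ∀ (a : α) (b : Bool), π (FreeMonoid.of (a, !b)) = (π (FreeMonoid.of (a, b)))⁻¹)
    (u : Word α) : ev π (wordInv u) = (ev π u)⁻¹ := by
  induction u with
  | nil => simp [wordInv, ev]
  | cons a u ih =>
    have hinv : wordInv (a :: u) = wordInv u ++ [letterInv a] := by simp [wordInv]
    rw [hinv, ev_append, ih, ev_singleton, letterInv, hπ, ev_cons, mul_inv_rev]

end Evaluation

namespace Automaton

lemma Path.append {β : Type} {M : Automaton β Q} {x y z : Q} {u v : List β}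
    (hu : M.Path x u y) (hv : M.Path y v z) : M.Path x (u ++ v) z := by
  induction hu with
  | nil => exact hv
  | cons he _ ih => exact Path.cons he (ih hv)

lemma Path.wordInv {M : Automaton (α × Bool) Q} (hM : M.Involutive)
    {x y : Q} {u : Word α} (h : M.Path x u y) : M.Path y (Stallings.wordInv u) x := by
  induction h with
  | nil => exact Path.nil _
  | cons he _ ih =>
    rw [Stallings.wordInv, List.map_cons, List.reverse_cons]
    exact ih.append (Path.cons (hM _ _ _ he) (Path.nil _))

section Merge

variable {β : Type} [DecidableEq Q] {M : Automaton β Q} {p q : Q}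

/-- The state map `Q → Q` realizing the identification of `q` with `p` in `merge`. -/
def mergeState (p q x : Q) : Q := if x = q then p else x

lemma merge_edges_iff {x y : Q} {a : β} : (x, a, y) ∈ (M.merge p q).edges ↔
    ∃ x' y', (x', a, y') ∈ M.edges ∧ mergeState p q x' = x ∧ mergeState p q y' = y := by
  simp only [merge, mergeState, Set.mem_ofPred_eq, Prod.exists, Prod.mk.injEq]
  constructor
  · rintro ⟨x', a', y', he, rfl, rfl, rfl⟩
    exact ⟨x', y', he, rfl, rfl⟩
  · rintro ⟨x', y', he, rfl, rfl⟩
    exact ⟨x', a, y', he, rfl, rfl, rfl⟩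

lemma Path.merge {x y : Q} {u : List β} (h : M.Path x u y) :
    (M.merge p q).Path (mergeState p q x) u (mergeState p q y) := by
  induction h with
  | nil => exact Path.nil _
  | cons he _ ih => exact Path.cons (merge_edges_iff.2 ⟨_, _, he, rfl, rfl⟩) ih

lemma lang_subset_lang_merge : M.lang ⊆ (M.merge p q).lang := by
  rintro u ⟨t, ht, hu⟩
  exact ⟨mergeState p q t, ⟨t, ht, rfl⟩, hu.merge⟩

end Merge

section KernelPaths

variable [DecidableEq Q] {p q : Q} {π : FreeMonoid (α × Bool) →* G}
  {M : Automaton (α × Bool) Q}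

lemma exists_kernel_path_of_mergeState_eq (hπ : IsMEpi π) (hM : M.Involutive) {w : Word α}
    (hw : M.Path p w q) (hw1 : ev π w = 1) (x y : Q) (hxy : mergeState p q x = mergeState p q y) :
    ∃ c, M.Path x c y ∧ ev π c = 1 := by
  unfold mergeState at hxy
  split_ifs at hxy with hx hy hy
  · exact ⟨[], hx.trans hy.symm ▸ Path.nil x, map_one π⟩
  · subst hx hxy
    exact ⟨wordInv w, hw.wordInv hM, by rw [ev_wordInv hπ.matched, hw1, inv_one]⟩
  · subst hy hxy
    exact ⟨w, hw, hw1⟩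
  · exact ⟨[], hxy ▸ Path.nil x, map_one π⟩

section Lift

variable (hconn : ∀ x y, mergeState p q x = mergeState p q y → ∃ c, M.Path x c y ∧ ev π c = 1)
include hconn

lemma Path.exists_lift_of_merge {x y : Q} {u : Word α} (h : (M.merge p q).Path x u y)
    (x' : Q) (hx' : mergeState p q x' = x) :
    ∃ y' u', mergeState p q y' = y ∧ M.Path x' u' y' ∧ ev π u' = ev π u := by
  induction h generalizing x' with
  | nil => exact ⟨x', [], hx', Path.nil _, rfl⟩
  | @cons x z y a u he _ ih =>
    obtain ⟨s, t, hst, hs, ht⟩ := merge_edges_iff.1 he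
    obtain ⟨c, hc, hc1⟩ := hconn x' s (hx'.trans hs.symm)
    obtain ⟨y', u', hy', hu', hev⟩ := ih t ht
    refine ⟨y', c ++ a :: u', hy', hc.append (Path.cons hst hu'), ?_⟩
    rw [ev_append, hc1, one_mul, ev_cons, hev, ev_cons]

lemma evImg_lang_merge_subset : evImg π (M.merge p q).lang ⊆ evImg π M.lang := by
  rintro g ⟨u, ⟨t, ⟨t', ht', rfl⟩, hu⟩, rfl⟩
  obtain ⟨y', u', hy', hu', hev⟩ := hu.exists_lift_of_merge hconn M.start rfl
  obtain ⟨c, hc, hc1⟩ := hconn y' t' hy'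
  exact ⟨u' ++ c, ⟨t', ht', hu'.append hc⟩, by rw [ev_append, hc1, mul_one, hev]⟩

end Lift

end KernelPaths

end Automaton

end Stallings

open Stallings in
theorem lang_merge_of_kernel_path_general {α G Q : Type} [Group G]
    [DecidableEq Q] (π : FreeMonoid (α × Bool) →* G) (hπ : IsMEpi π)
    (M : Automaton (α × Bool) Q) (hM : M.Involutive)
    (p q : Q) (w : Word α) (hw : M.Path p w q) (hw1 : ev π w = 1) :
    M.lang ⊆ (M.merge p q).lang ∧ evImg π (M.merge p q).lang = evImg π M.lang := by
  have hconn := Automaton.exists_kernel_path_of_mergeState_eq hπ hM hw hw1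
  refine ⟨Automaton.lang_subset_lang_merge, ?_⟩
  refine (Automaton.evImg_lang_merge_subset hconn).antisymm ?_
  rintro g ⟨u, hu, rfl⟩
  exact ⟨u, Automaton.lang_subset_lang_merge u hu, rfl⟩

open Stallings in
/-- If `M` is an involutive Ã-automaton with a path from `p` to `q`
labelled by a word `w` with `wπ = 1`, then the automaton `B` obtained by
identifying `p` and `q` satisfies `L(M) ⊆ L(B)` and `(L(B))π = (L(M))π`. -/
theorem lang_merge_of_kernel_path {α G Q : Type} [Finite α] [Group G]
    [DecidableEq Q] (π : FreeMonoid (α × Bool) →* G) (hπ : IsMEpi π)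
    (M : Automaton (α × Bool) Q) (hM : M.Involutive)
    (p q : Q) (w : Word α) (hw : M.Path p w q) (hw1 : ev π w = 1) :
    M.lang ⊆ (M.merge p q).lang ∧ evImg π (M.merge p q).lang = evImg π M.lang :=
  lang_merge_of_kernel_path_general π hπ M hM p q w hw hw1
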